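/- Define integers Eu_M for loopless matroids M by the recursion Eu_∅ = 1 and Eu_M = Σ_{F flat, F ≠ ∅} c_{M^F} · Eu_{M_F}, where c_N = −2^{rk N} χ_N(1/2). Then Eu_M = χ_M(2) for every loopless matroid M. -/

import Mathlib

open scoped Matroid

variable {α : Type*}

/-- The rank of a set in a matroid: the maximum size of an independent subset of the set. -/
noncomputable def Matroid.rkSet (M : Matroid α) (S : Set α) : ℕ :=
  ⨆ I : {I : Set α // M.Indep I ∧ I ⊆ S}, I.1.ncard

/-- The rank of a matroid: the rank of its ground set. -/
noncomputable def Matroid.rank (M : Matroid α) : ℕ := M.rkSet M.E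

/-- Deletion of a set from a matroid. -/
noncomputable def Matroid.del (M : Matroid α) (D : Set α) : Matroid α := M ↾ (M.E \ D)

/-- Contraction of a matroid by a set, defined via duality: `M / C = (M✶ \ C)✶`. -/
noncomputable def Matroid.con (M : Matroid α) (C : Set α) : Matroid α := (M✶.del C)✶

/-- A matroid is loopless if every singleton of the ground set is independent. -/
def Matroid.IsLoopless (M : Matroid α) : Prop := ∀ e ∈ M.E, M.Indep {e}

/-- A matroid is simple if every (at most two-element) subset `{e, f}` of the ground set is
independent. -/
def Matroid.IsSimple (M : Matroid α) : Prop := ∀ e ∈ M.E, ∀ f ∈ M.E, M.Indep {e, f}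

/-- The characteristic polynomial of a matroid, as a function of `t`, given by the
Whitney rank-generating-function formula `χ_M(t) = ∑_{S ⊆ E} (-1)^|S| t^(rk M - rk S)`
(which agrees with the Möbius-function definition for loopless matroids). -/
noncomputable def Matroid.charPoly (M : Matroid α) (t : ℚ) : ℚ :=
  ∑ᶠ (S : Set α) (_ : S ⊆ M.E), (-1 : ℚ) ^ S.ncard * t ^ (M.rank - M.rkSet S)

/-- The beta invariant of a matroid, via Crapo's formula
`β(M) = (-1)^(rk M) ∑_{S ⊆ E} (-1)^|S| rk S`. -/
noncomputable def Matroid.betaInv (M : Matroid α) : ℚ :=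
  (-1 : ℚ) ^ M.rank * ∑ᶠ (S : Set α) (_ : S ⊆ M.E), (-1 : ℚ) ^ S.ncard * (M.rkSet S : ℚ)

/-- The invariant `c_M = -2^(rk M) · χ_M(1/2)`. -/
noncomputable def Matroid.cInv (M : Matroid α) : ℚ :=
  - 2 ^ M.rank * M.charPoly (1/2)


/-!
Write `r` for the rank function and `E` for the ground set. Whitney's formula gives
`c_{M^F} = -∑_{S ⊆ F} (-1)^|S| 2^{r S}` and `χ_{M/F}(2) = ∑_{F ⊆ U ⊆ E} (-1)^|U \ F| 2^{r E - r U}`.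
Summed over *all* `F ⊆ E`, the product of the two is
`-∑_{S ⊆ U} (-1)^|S| 2^{r S + r E - r U} ∑_{S ⊆ F ⊆ U} (-1)^|U \ F|`, and the inner sum kills
every term with `S ≠ U`, leaving `-2^{r E} ∑_{U ⊆ E} (-1)^|U| = 0`. If `F` is not a flat, `M/F` has
a loop and `χ_{M/F} = 0`; the term `F = ∅` is `-χ_M(2)`. So `χ_M(2)` satisfies the recursion
defining `Eu`, and induction on `|E|` concludes.
-/

namespace Finset

variable {R : Type*} [DecidableEq α] [CommRing R]

theorem sum_powerset_neg_one_pow_card_eq_ite (s : Finset α) :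
    ∑ t ∈ s.powerset, (-1 : R) ^ #t = if s = ∅ then 1 else 0 := by
  have h := congrArg (Int.cast : ℤ → R) (sum_powerset_neg_one_pow_card (x := s))
  push_cast at h
  simpa [apply_ite (Int.cast : ℤ → R)] using h

theorem sum_Icc_neg_one_pow_card_sdiff {s u : Finset α} (hsu : s ⊆ u) :
    ∑ t ∈ Icc s u, (-1 : R) ^ #(u \ t) = if s = u then 1 else 0 := by
  have hcompl : ∑ t ∈ Icc s u, (-1 : R) ^ #(u \ t) = ∑ v ∈ (u \ s).powerset, (-1 : R) ^ #v := by
    refine sum_nbij' (u \ ·) (u \ ·) ?_ ?_ ?_ ?_ fun t _ => rfl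
    · intro t ht
      simp only [mem_Icc, mem_powerset] at ht ⊢
      exact sdiff_subset_sdiff subset_rfl ht.1
    · intro v hv
      simp only [mem_Icc, mem_powerset] at hv ⊢
      exact ⟨subset_sdiff.2 ⟨hsu, (disjoint_of_subset_left hv sdiff_disjoint).symm⟩, sdiff_subset⟩
    · intro t ht
      exact sdiff_sdiff_eq_self (mem_Icc.1 ht).2
    · intro v hv
      exact sdiff_sdiff_eq_self ((mem_powerset.1 hv).trans sdiff_subset)
  rw [hcompl, sum_powerset_neg_one_pow_card_eq_ite]
  exact if_congr (by rw [sdiff_eq_empty_iff_subset]; exact ⟨(hsu.antisymm ·), (· ▸ subset_rfl)⟩)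
    rfl rfl

theorem sum_powerset_sdiff_eq_sum_Icc {s u : Finset α} (hsu : s ⊆ u) (f : Finset α → R) :
    ∑ t ∈ (u \ s).powerset, f (s ∪ t) = ∑ t ∈ Icc s u, f t := by
  rw [Icc_eq_image_powerset hsu, sum_image]
  intro t ht t' ht' h
  simp only [coe_powerset, Set.mem_preimage, Set.mem_powerset_iff, coe_subset] at ht ht'
  beta_reduce at h
  rw [← union_sdiff_cancel_left (disjoint_of_subset_left ht sdiff_disjoint).symm,
    ← union_sdiff_cancel_left (disjoint_of_subset_left ht' sdiff_disjoint).symm, h]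

theorem sum_powerset_mul_sum_powerset_sdiff (s : Finset α) (a b : Finset α → R) :
    ∑ t ∈ s.powerset, (∑ u ∈ t.powerset, (-1) ^ #u * a u) *
        ∑ v ∈ (s \ t).powerset, (-1) ^ #v * b (t ∪ v) =
      ∑ w ∈ s.powerset, (-1) ^ #w * a w * b w := by
  have hIcc : ∀ t ∈ s.powerset, ∑ v ∈ (s \ t).powerset, (-1) ^ #v * b (t ∪ v) =
      ∑ w ∈ Icc t s, (-1) ^ #(w \ t) * b w := by
    intro t ht
    rw [← sum_powerset_sdiff_eq_sum_Icc (mem_powerset.1 ht)]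
    refine sum_congr rfl fun v hv => ?_
    rw [union_sdiff_cancel_left (disjoint_of_subset_left (mem_powerset.1 hv) sdiff_disjoint).symm]
  calc _ = ∑ t ∈ s.powerset, ∑ u ∈ t.powerset, ∑ w ∈ Icc t s,
        (-1) ^ #u * a u * ((-1) ^ #(w \ t) * b w) := by
        refine sum_congr rfl fun t ht => ?_
        rw [hIcc t ht, sum_mul_sum]
    _ = ∑ u ∈ s.powerset, ∑ w ∈ Icc u s, ∑ t ∈ Icc u w,
        (-1) ^ #u * a u * ((-1) ^ #(w \ t) * b w) := by
        rw [sum_comm' (t' := s.powerset) (s' := (Icc · s)) fun t u => by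
          simp only [mem_powerset, mem_Icc]; grind [Subset.trans]]
        refine sum_congr rfl fun u _ => sum_comm' fun t w => by
          simp only [mem_Icc]; grind [Subset.trans]
    _ = ∑ w ∈ s.powerset, ∑ u ∈ w.powerset,
        (-1) ^ #u * a u * b w * ∑ t ∈ Icc u w, (-1) ^ #(w \ t) := by
        rw [sum_comm' (t' := s.powerset) (s' := powerset) fun u w => by
          simp only [mem_powerset, mem_Icc]; grind [Subset.trans]]
        refine sum_congr rfl fun w _ => sum_congr rfl fun u _ => ?_
        rw [mul_sum]
        exact sum_congr rfl fun t _ => by ring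
    _ = _ := by
        refine sum_congr rfl fun w _ => ?_
        rw [sum_congr rfl fun u hu => by
          rw [sum_Icc_neg_one_pow_card_sdiff (mem_powerset.1 hu), mul_ite, mul_one, mul_zero]]
        rw [sum_ite_eq' _ _ , if_pos (mem_powerset_self w)]

theorem sum_powerset_neg_one_pow_card_mul_eq_zero {s : Finset α} {e : α} (he : e ∈ s)
    (f : Finset α → R) (hf : ∀ t ⊆ s, e ∉ t → f (insert e t) = f t) :
    ∑ t ∈ s.powerset, (-1) ^ #t * f t = 0 := by
  rw [← insert_erase he, sum_powerset_insert (notMem_erase e s), ← sum_add_distrib]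
  refine sum_eq_zero fun t ht => ?_
  have hts : t ⊆ s.erase e := mem_powerset.1 ht
  have het : e ∉ t := fun h => notMem_erase e s (hts h)
  rw [card_insert_of_notMem het, hf t (hts.trans (erase_subset e s)) het, pow_succ]
  ring

end Finset

open Classical in
theorem finsum_eq_sum_filter_powerset {β : Type*} [AddCommMonoid β] (s : Finset α)
    {p : Set α → Prop} (hp : ∀ S, p S → S ⊆ ↑s) (f : Set α → β) :
    ∑ᶠ (S : Set α) (_ : p S), f S = ∑ A ∈ s.powerset.filter (fun A : Finset α => p ↑A), f ↑A := by
  have himage : ((↑) : Finset α → Set α) '' ↑(s.powerset.filter (p ∘ (↑))) = {S | p S} := by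
    ext S
    simp only [Finset.coe_filter, Finset.mem_powerset, Function.comp_apply, Set.mem_image,
      Set.mem_ofPred_eq]
    refine ⟨fun ⟨A, ⟨_, hA⟩, hAS⟩ => hAS ▸ hA, fun hS => ?_⟩
    have hfin : S.Finite := s.finite_toSet.subset (hp S hS)
    exact ⟨hfin.toFinset, ⟨by simpa using hp S hS, by simpa using hS⟩, hfin.coe_toFinset⟩
  rw [show (∑ᶠ (S : Set α) (_ : p S), f S) = ∑ᶠ S ∈ {S | p S}, f S from rfl, ← himage,
    finsum_mem_image Finset.coe_injective.injOn, finsum_mem_coe_finset]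
  rfl

open Set

namespace Matroid

variable {M : Matroid α} {S R T C X F : Set α} {e : α}

theorem eRk_contract_add_eRk (M : Matroid α) (C X : Set α) :
    (M ／ C).eRk X + M.eRk C = M.eRk (X ∪ C) := by
  obtain ⟨J, hJ⟩ := M.exists_isBasis' C
  obtain ⟨K, hK, hJK⟩ :=
    hJ.indep.subset_isBasis'_of_subset (hJ.subset.trans subset_union_right : J ⊆ X ∪ C)
  have hKC : (M ／ C).IsBasis' (K \ C) ((X ∪ C) \ C) :=
    hK.contract_isBasis' hJ (hK.indep.subset (union_subset sdiff_subset hJK))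
  have hKJ : K ∩ C = J :=
    (hJ.eq_of_subset_indep (hK.indep.subset inter_subset_left)
      (subset_inter hJK hJ.subset) inter_subset_right).symm
  have hXC : (M ／ C).eRk ((X ∪ C) \ C) = (M ／ C).eRk X := by
    rw [← eRk_inter_ground, ← (M ／ C).eRk_inter_ground X, contract_ground]
    congr 1
    ext x
    simp only [mem_inter_iff, mem_sdiff, mem_union]
    tauto
  rw [← hXC, hKC.eRk_eq_encard, hJ.eRk_eq_encard, hK.eRk_eq_encard, ← hKJ,
    encard_sdiff_add_encard_inter]

theorem IsRkFinite.cast_rkSet (h : M.IsRkFinite S) : (M.rkSet S : ℕ∞) = M.eRk S := by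
  obtain ⟨I, hI, hIfin⟩ := h.exists_finite_isBasis'
  have hle : ∀ J : {J : Set α // M.Indep J ∧ J ⊆ S}, J.1.ncard ≤ I.ncard := fun J => by
    have hJfin := h.finite_of_indep_subset J.2.1 J.2.2
    rw [← ENat.natCast_le_natCast, hJfin.cast_ncard_eq, hIfin.cast_ncard_eq, ← hI.eRk_eq_encard]
    exact J.2.1.encard_le_eRk_of_subset J.2.2
  have hrk : M.rkSet S = I.ncard :=
    le_antisymm (ciSup_le' hle) (le_ciSup ⟨_, forall_mem_range.2 hle⟩ ⟨I, hI.indep, hI.subset⟩)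
  rw [hrk, hIfin.cast_ncard_eq, hI.eRk_eq_encard]

theorem rkSet_mono (hT : T.Finite) (hST : S ⊆ T) : M.rkSet S ≤ M.rkSet T := by
  rw [← ENat.natCast_le_natCast, (M.isRkFinite_of_finite (hT.subset hST)).cast_rkSet,
    (M.isRkFinite_of_finite hT).cast_rkSet]
  exact M.eRk_mono hST

theorem rkSet_empty (M : Matroid α) : M.rkSet ∅ = 0 := by
  rw [← ENat.natCast_inj, (IsRkFinite.empty M).cast_rkSet, eRk_empty, ENat.natCast_zero]

theorem rkSet_restrict (hSR : S ⊆ R) : (M ↾ R).rkSet S = M.rkSet S := by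
  have hindep : (fun I => (M ↾ R).Indep I ∧ I ⊆ S) = fun I => M.Indep I ∧ I ⊆ S := by
    ext I
    rw [restrict_indep_iff]
    exact ⟨fun h => ⟨h.1.1, h.2⟩, fun h => ⟨⟨h.1, h.2.trans hSR⟩, h.2⟩⟩
  unfold rkSet
  rw [hindep]

theorem con_eq_contract (M : Matroid α) (C : Set α) : M.con C = M ／ C := rfl

theorem rkSet_con_add (hX : X.Finite) (hC : C.Finite) :
    (M.con C).rkSet X + M.rkSet C = M.rkSet (X ∪ C) := by
  rw [con_eq_contract, ← ENat.natCast_inj, ENat.natCast_add,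
    ((M ／ C).isRkFinite_of_finite hX).cast_rkSet, (M.isRkFinite_of_finite hC).cast_rkSet,
    (M.isRkFinite_of_finite (hX.union hC)).cast_rkSet]
  exact M.eRk_contract_add_eRk C X

theorem IsLoop.rkSet_insert (he : M.IsLoop e) (hX : X.Finite) :
    M.rkSet (insert e X) = M.rkSet X := by
  rw [← ENat.natCast_inj, (M.isRkFinite_of_finite (hX.insert e)).cast_rkSet,
    (M.isRkFinite_of_finite hX).cast_rkSet, ← union_singleton]
  exact M.eRk_eq_eRk_union_eRk_le_zero X he.eRk_eq.le

open Finset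

theorem charPoly_eq_sum_powerset {E : Finset α} (hE : M.E = ↑E) (t : ℚ) :
    M.charPoly t = ∑ A ∈ E.powerset, (-1) ^ #A * t ^ (M.rank - M.rkSet ↑A) := by
  classical
  rw [charPoly, hE, finsum_eq_sum_filter_powerset E fun _ h => h,
    filter_true_of_mem fun A hA => coe_subset.2 (mem_powerset.1 hA)]
  exact sum_congr rfl fun A _ => by rw [ncard_coe_finset]

theorem charPoly_emptyOn (t : ℚ) : (emptyOn α).charPoly t = 1 := by
  classical
  rw [charPoly_eq_sum_powerset (E := ∅) (by simp), Finset.powerset_empty, sum_singleton]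
  simp [rank, rkSet_empty]

theorem cInv_restrict (A : Finset α) :
    (M ↾ ↑A).cInv = -∑ S ∈ A.powerset, (-1) ^ #S * 2 ^ M.rkSet ↑S := by
  rw [cInv, charPoly_eq_sum_powerset rfl, show (M ↾ ↑A).rank = M.rkSet ↑A from
    rkSet_restrict subset_rfl, neg_mul, mul_sum]
  refine congrArg _ (sum_congr rfl fun S hS => ?_)
  have hSA : (↑S : Set α) ⊆ ↑A := coe_subset.2 (mem_powerset.1 hS)
  have hle : M.rkSet ↑S ≤ M.rkSet ↑A := rkSet_mono A.finite_toSet hSA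
  calc (2 : ℚ) ^ M.rkSet ↑A * ((-1) ^ #S * (1 / 2) ^ (M.rkSet ↑A - (M ↾ ↑A).rkSet ↑S))
      = (-1) ^ #S * (2 ^ M.rkSet ↑S * (2 * (1 / 2)) ^ (M.rkSet ↑A - M.rkSet ↑S)) := by
        rw [rkSet_restrict hSA, mul_pow, ← mul_assoc (2 ^ M.rkSet ↑S), ← pow_add,
          Nat.add_sub_cancel' hle]
        ring
    _ = (-1) ^ #S * 2 ^ M.rkSet ↑S := by norm_num

theorem charPoly_con [DecidableEq α] {E A : Finset α} (hE : M.E = ↑E) (hAE : A ⊆ E) (t : ℚ) :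
    (M.con ↑A).charPoly t =
      ∑ T ∈ (E \ A).powerset, (-1) ^ #T * t ^ (M.rank - M.rkSet ↑(A ∪ T)) := by
  have hground : (M.con ↑A).E = ↑(E \ A) := by
    rw [con_eq_contract, contract_ground, hE, coe_sdiff]
  rw [charPoly_eq_sum_powerset hground]
  refine sum_congr rfl fun T _ => ?_
  have hrank := rkSet_con_add (M := M) (E \ A).finite_toSet A.finite_toSet
  have hT := rkSet_con_add (M := M) T.finite_toSet A.finite_toSet
  rw [← coe_union, Finset.sdiff_union_of_subset hAE, ← hE] at hrank
  rw [← coe_union, Finset.union_comm] at hT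
  rw [rank, rank, hground]
  congr 2
  omega

theorem charPoly_eq_zero_of_isLoop (hE : M.E.Finite) (he : M.IsLoop e) (t : ℚ) :
    M.charPoly t = 0 := by
  classical
  obtain ⟨E, hE⟩ := hE.exists_finset_coe
  rw [charPoly_eq_sum_powerset hE.symm]
  refine sum_powerset_neg_one_pow_card_mul_eq_zero (by simpa [← hE] using he.mem_ground) _
    fun T _ _ => ?_
  rw [coe_insert, he.rkSet_insert T.finite_toSet]

theorem charPoly_con_eq_zero_of_not_isFlat (hE : M.E.Finite) (hC : C ⊆ M.E) (hCf : ¬ M.IsFlat C)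
    (t : ℚ) : (M.con C).charPoly t = 0 := by
  obtain ⟨e, hecl, heC⟩ : ∃ e ∈ M.closure C, e ∉ C := by
    refine Set.not_subset.1 fun hcl => hCf ?_
    rw [isFlat_iff_closure_eq]
    exact hcl.antisymm (M.subset_closure C hC)
  rw [con_eq_contract]
  exact charPoly_eq_zero_of_isLoop (hE.subset Set.sdiff_subset)
    (contract_isLoop_iff_mem_closure.2 ⟨hecl, heC⟩) t

theorem ncard_con_lt (hE : M.E.Finite) (hF : F ⊆ M.E) (hne : F.Nonempty) :
    (M.con F).E.ncard < M.E.ncard := by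
  rw [con_eq_contract, contract_ground]
  exact ncard_lt_ncard (sdiff_ssubset_left_iff.2 (by rwa [inter_eq_right.2 hF])) hE

theorem IsFlat.con_isLoopless (hF : M.IsFlat F) : (M.con F).IsLoopless :=
  fun _ he => indep_singleton.2 (contract_isNonloop_iff.2 (by rwa [hF.closure]))

theorem sum_powerset_cInv_mul_charPoly_con {E : Finset α} (hE : M.E = ↑E) (hne : E.Nonempty) :
    ∑ A ∈ E.powerset, (M ↾ ↑A).cInv * (M.con ↑A).charPoly 2 = 0 := by
  classical
  have hrk : ∀ U ∈ E.powerset, M.rkSet ↑U ≤ M.rank := fun U hU => by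
    rw [rank, hE]
    exact rkSet_mono E.finite_toSet (coe_subset.2 (mem_powerset.1 hU))
  calc ∑ A ∈ E.powerset, (M ↾ ↑A).cInv * (M.con ↑A).charPoly 2
      = -∑ A ∈ E.powerset, (∑ S ∈ A.powerset, (-1) ^ #S * 2 ^ M.rkSet ↑S) *
          ∑ T ∈ (E \ A).powerset, (-1) ^ #T * 2 ^ (M.rank - M.rkSet ↑(A ∪ T)) := by
        rw [← sum_neg_distrib]
        refine sum_congr rfl fun A hA => ?_
        rw [cInv_restrict, charPoly_con hE (mem_powerset.1 hA), neg_mul]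
    _ = -∑ U ∈ E.powerset, (-1) ^ #U * 2 ^ M.rkSet ↑U * 2 ^ (M.rank - M.rkSet ↑U) :=
        congrArg _ (sum_powerset_mul_sum_powerset_sdiff E (fun U => 2 ^ M.rkSet ↑U)
          fun U => 2 ^ (M.rank - M.rkSet ↑U))
    _ = -(2 ^ M.rank * ∑ U ∈ E.powerset, (-1) ^ #U) := by
        rw [mul_sum]
        refine congrArg _ (sum_congr rfl fun U hU => ?_)
        rw [mul_assoc, ← pow_add, Nat.add_sub_cancel' (hrk U hU), mul_comm]
    _ = 0 := by rw [sum_powerset_neg_one_pow_card_eq_ite, if_neg hne.ne_empty, mul_zero, neg_zero]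

theorem finsum_flats_cInv_mul_charPoly_con (hE : M.E.Finite) (hne : M.E.Nonempty) :
    ∑ᶠ (F : Set α) (_ : M.IsFlat F ∧ F.Nonempty), (M ↾ F).cInv * (M.con F).charPoly 2 =
      M.charPoly 2 := by
  classical
  obtain ⟨E, hE⟩ := hE.exists_finset_coe
  rw [finsum_eq_sum_filter_powerset E fun F hF => hE ▸ hF.1.subset_ground]
  set G : Finset α → ℚ := fun A => (M ↾ ↑A).cInv * (M.con ↑A).charPoly 2 with hG
  have hflat : ∀ A ∈ E.powerset.erase ∅, G A ≠ 0 → M.IsFlat ↑A ∧ (↑A : Set α).Nonempty := by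
    intro A hA hGA
    refine ⟨by_contra fun hAf => hGA ?_,
      coe_nonempty.2 (Finset.nonempty_iff_ne_empty.2 (ne_of_mem_erase hA))⟩
    show (M ↾ ↑A).cInv * (M.con ↑A).charPoly 2 = 0
    rw [charPoly_con_eq_zero_of_not_isFlat (hE ▸ E.finite_toSet)
      (hE ▸ coe_subset.2 (mem_powerset.1 (mem_of_mem_erase hA))) hAf, mul_zero]
  calc _ = ∑ A ∈ (E.powerset.erase ∅).filter
          (fun A : Finset α => M.IsFlat ↑A ∧ (↑A : Set α).Nonempty), G A := by
        congr 1
        ext A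
        simp only [mem_filter, mem_erase, coe_nonempty, Finset.nonempty_iff_ne_empty]
        tauto
    _ = ∑ A ∈ E.powerset, G A - G ∅ := by
        rw [sum_filter_of_ne hflat, sum_erase_eq_sub (empty_mem_powerset E)]
    _ = M.charPoly 2 := by
        have hG0 : G ∅ = -M.charPoly 2 := by
          simp only [hG]
          rw [cInv_restrict, Finset.powerset_empty, sum_singleton, coe_empty, rkSet_empty,
            con_eq_contract, contract_empty]
          simp
        rw [sum_powerset_cInv_mul_charPoly_con hE.symm (by simpa [← hE] using hne), hG0,
          zero_sub, neg_neg]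

end Matroid

/-- If `Eu` satisfies the recursion `Eu_∅ = 1` and
`Eu_M = ∑_{∅ ≠ F flat} c_{M^F} · Eu_{M_F}` (with `c_N = -2^(rk N) χ_N(1/2)`), then
`Eu_M = χ_M(2)` for every finite loopless matroid `M`. -/
theorem eu_eq_charPoly_two (Eu : Matroid α → ℚ)
    (h0 : Eu (Matroid.emptyOn α) = 1)
    (hrec : ∀ N : Matroid α, N.E.Finite → N.IsLoopless → N.E.Nonempty →
      Eu N = ∑ᶠ (F : Set α) (_ : N.IsFlat F ∧ F.Nonempty), (N ↾ F).cInv * Eu (N.con F)) :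
    ∀ M : Matroid α, M.E.Finite → M.IsLoopless → Eu M = M.charPoly 2 := by
  intro M hfin hM
  induction hn : M.E.ncard using Nat.strong_induction_on generalizing M with
  | _ n ih =>
  obtain hE | hne := M.E.eq_empty_or_nonempty
  · rw [Matroid.ground_eq_empty_iff.1 hE, h0, Matroid.charPoly_emptyOn]
  rw [hrec M hfin hM hne, ← M.finsum_flats_cInv_mul_charPoly_con hfin hne]
  refine finsum_congr fun F => finsum_congr fun hF => ?_
  rw [ih _ (hn ▸ M.ncard_con_lt hfin hF.1.subset_ground hF.2) (M.con F)
    (hfin.subset sdiff_subset) hF.1.con_isLoopless rfl]
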